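/- arXiv:2206.02700 — 3 statements merged into one kernel-verified Lean document; each statement's English description precedes it below -/
import Mathlib

section
/- If X is a flip cut set of the convex n-gon, then every vertex of the n-gon is an endpoint of some chord of X. -/
/-!
Suppose no chord of `X` ends at `p`. The fan of all chords at `p` then avoids `X`, and every
triangulation `T` avoiding `X` is joined to the fan inside `F₋ₓ`. Number the vertices from `p`
and let `e = {a, b}`, `0 < a < b`, be a chord of `T` not at `p` with `b - a` maximal. The
triangle of `T` beyond `e` has apex some `a < w < b`, and no other chord of `T` separates `w`
from `p`; so flipping `e` to `{p, w}` stays inside `F₋ₓ` and lowers the number of chords not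
at `p`.
-/

namespace FlipCut

/-- `x` lies strictly inside the open cyclic arc from `a` to `b`
(going forward in the cyclic order on `ZMod n`). -/
def Btw (n : ℕ) (a x b : ZMod n) : Prop :=
  0 < (x - a).val ∧ (x - a).val < (b - a).val

/-- An unordered pair of vertices of the convex `n`-gon is a *chord*:
its two endpoints are distinct and not cyclically adjacent. -/
def IsChord (n : ℕ) (e : Sym2 (ZMod n)) : Prop :=
  ¬ e.IsDiag ∧ ∀ a ∈ e, ∀ b ∈ e, a ≠ b → b ≠ a + 1 ∧ b ≠ a - 1

/-- Two chords *cross*: they can be written as `{a, b}` and `{c, d}` where `c`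
lies strictly inside the open cyclic arc from `a` to `b` and `d` lies strictly
inside the open cyclic arc from `b` to `a` (i.e. the endpoint pairs separate
each other in the cyclic order, equivalently exactly one of `c, d` lies in the
open cyclic arc from `a` to `b`). -/
def Crosses (n : ℕ) (e f : Sym2 (ZMod n)) : Prop :=
  ∃ a b c d : ZMod n, e = s(a, b) ∧ f = s(c, d) ∧ Btw n a c b ∧ Btw n b d a

/-- A *triangulation* of the convex `n`-gon: a set of exactly `n - 3`
pairwise non-crossing chords. -/
def IsTriangulation (n : ℕ) (T : Finset (Sym2 (ZMod n))) : Prop :=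
  T.card = n - 3 ∧ (∀ e ∈ T, IsChord n e) ∧
    ∀ e ∈ T, ∀ f ∈ T, e ≠ f → ¬ Crosses n e f

/-- Triangulations `T` and `T'` differ by a *flip*: their symmetric difference
has exactly two chords. -/
def FlipAdj (n : ℕ) (T T' : Finset (Sym2 (ZMod n))) : Prop :=
  (symmDiff T T').card = 2

/-- `T` *avoids* `X`: `T` contains no chord of `X`. -/
def Avoids (n : ℕ) (T X : Finset (Sym2 (ZMod n))) : Prop :=
  ∀ e ∈ X, e ∉ T

/-- A vertex of the flip graph `F₋ₓ`: a triangulation avoiding `X`. -/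
def AvoidingTri (n : ℕ) (X T : Finset (Sym2 (ZMod n))) : Prop :=
  IsTriangulation n T ∧ Avoids n T X

/-- A single edge of the flip graph `F₋ₓ`: both endpoints are triangulations
avoiding `X` and they differ by a flip. -/
def FlipStep (n : ℕ) (X T T' : Finset (Sym2 (ZMod n))) : Prop :=
  AvoidingTri n X T ∧ AvoidingTri n X T' ∧ FlipAdj n T T'

/-- `S` and `T` are joined by a path in the flip graph `F₋ₓ`: a sequence of
flips in which every intermediate triangulation avoids `X`. -/
def FlipConn (n : ℕ) (X S T : Finset (Sym2 (ZMod n))) : Prop :=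
  Relation.ReflTransGen (FlipStep n X) S T

/-- The flip graph `F₋ₓ` is connected. -/
def FlipGraphConnected (n : ℕ) (X : Finset (Sym2 (ZMod n))) : Prop :=
  ∀ S T, AvoidingTri n X S → AvoidingTri n X T → FlipConn n X S T

/-- `X` is a *flip cut set*: a set of chords such that the flip graph `F₋ₓ`
is disconnected. -/
def IsFlipCutSet (n : ℕ) (X : Finset (Sym2 (ZMod n))) : Prop :=
  (∀ e ∈ X, IsChord n e) ∧ ¬ FlipGraphConnected n X

section Coordinates

variable {n : ℕ}

def vertex (p : ZMod n) (t : ℕ) : ZMod n := p + t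

@[simp]
lemma vertex_zero (p : ZMod n) : vertex p 0 = p := by simp [vertex]

variable (p : ZMod n)

lemma val_vertex_sub_vertex {i j : ℕ} (hi : i < n) (hj : j < n) :
    (vertex p i - vertex p j).val = if j ≤ i then i - j else i + n - j := by
  have hsub : vertex p i - vertex p j = (i : ZMod n) - j := by unfold vertex; ring
  rw [hsub]
  split_ifs with hji
  · rw [← Nat.cast_sub hji, ZMod.val_cast_of_lt (by omega)]
  · have : (i : ZMod n) - j = ((i + n - j : ℕ) : ZMod n) := by
      rw [Nat.cast_sub (by omega), Nat.cast_add, ZMod.natCast_self, add_zero]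
    rw [this, ZMod.val_cast_of_lt (by omega)]

lemma vertex_inj {i j : ℕ} (hi : i < n) (hj : j < n) : vertex p i = vertex p j ↔ i = j := by
  refine ⟨fun h => ?_, fun h => h ▸ rfl⟩
  have := val_vertex_sub_vertex p hi hj
  rw [h, sub_self, ZMod.val_zero] at this
  split_ifs at this <;> omega

lemma mem_vertex_mk_iff {i j : ℕ} (hi : i < n) (hj : j < n) :
    p ∈ s(vertex p i, vertex p j) ↔ i = 0 ∨ j = 0 := by
  have hp : ∀ {t}, t < n → (p = vertex p t ↔ t = 0) := fun ht => by
    have := vertex_inj p ht (j := 0) (by omega)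
    rw [vertex_zero] at this
    exact eq_comm.trans this
  rw [Sym2.mem_iff, hp hi, hp hj]

lemma btw_vertex_iff {i j k : ℕ} (hi : i < n) (hj : j < n) (hk : k < n) :
    Btw n (vertex p i) (vertex p j) (vertex p k) ↔
      i < j ∧ j < k ∨ j < k ∧ k < i ∨ k < i ∧ i < j := by
  unfold Btw
  rw [val_vertex_sub_vertex p hj hi, val_vertex_sub_vertex p hk hi]
  split_ifs <;> omega

lemma crosses_vertex_iff {i j k l : ℕ} (hij : i ≤ j) (hj : j < n) (hkl : k ≤ l) (hl : l < n) :
    Crosses n s(vertex p i, vertex p j) s(vertex p k, vertex p l) ↔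
      i < k ∧ k < j ∧ j < l ∨ k < i ∧ i < l ∧ l < j := by
  constructor
  · rintro ⟨a, b, c, d, hab, hcd, hacb, hbda⟩
    rcases Sym2.eq_iff.mp hab with ⟨rfl, rfl⟩ | ⟨rfl, rfl⟩ <;>
      rcases Sym2.eq_iff.mp hcd with ⟨rfl, rfl⟩ | ⟨rfl, rfl⟩ <;>
      rw [btw_vertex_iff p (by omega) (by omega) (by omega)] at hacb hbda <;> omega
  · rintro (h | h)
    · exact ⟨_, _, _, _, rfl, rfl, (btw_vertex_iff p (by omega) (by omega) (by omega)).2 (by omega),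
        (btw_vertex_iff p (by omega) (by omega) (by omega)).2 (by omega)⟩
    · exact ⟨_, _, _, _, rfl, Sym2.eq_swap,
        (btw_vertex_iff p (by omega) (by omega) (by omega)).2 (by omega),
        (btw_vertex_iff p (by omega) (by omega) (by omega)).2 (by omega)⟩

variable [NeZero n]

lemma vertex_val_sub (x : ZMod n) : vertex p (x - p).val = x := by
  simp [vertex]

lemma exists_eq_vertex_mk (f : Sym2 (ZMod n)) :
    ∃ i j, i ≤ j ∧ j < n ∧ f = s(vertex p i, vertex p j) := by
  induction f using Sym2.ind with
  | _ x y =>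
    rcases le_total (x - p).val (y - p).val with h | h
    · exact ⟨_, _, h, ZMod.val_lt _, by rw [vertex_val_sub, vertex_val_sub]⟩
    · exact ⟨_, _, h, ZMod.val_lt _, by rw [vertex_val_sub, vertex_val_sub, Sym2.eq_swap]⟩

end Coordinates

section Chords

variable {n : ℕ}

lemma isChord_mk_iff {x y : ZMod n} : IsChord n s(x, y) ↔ x ≠ y ∧ y - x ≠ 1 ∧ x - y ≠ 1 := by
  simp only [IsChord, Sym2.mk_isDiag_iff, Sym2.mem_iff, forall_eq_or_imp, forall_eq, ne_eq,
    sub_eq_iff_eq_add, eq_sub_iff_add_eq]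
  grind

lemma isChord_vertex_iff (hn : 1 < n) (p : ZMod n) {i j : ℕ} (hij : i ≤ j) (hj : j < n) :
    IsChord n s(vertex p i, vertex p j) ↔ i + 2 ≤ j ∧ j + 2 ≤ n + i := by
  have : Fact (1 < n) := ⟨hn⟩
  have eq_one_iff (z : ZMod n) : z = 1 ↔ z.val = 1 := by
    rw [← ZMod.val_one n, (ZMod.val_injective n).eq_iff]
  simp only [isChord_mk_iff, ne_eq]
  rw [vertex_inj p (by omega) hj, eq_one_iff, eq_one_iff,
    val_vertex_sub_vertex p hj (by omega), val_vertex_sub_vertex p (by omega) hj]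
  split_ifs <;> omega

lemma not_crosses_of_mem {e f : Sym2 (ZMod n)} {v : ZMod n} (he : v ∈ e) (hf : v ∈ f) :
    ¬ Crosses n e f := by
  rintro ⟨a, b, c, d, rfl, rfl, ⟨hca, hcb⟩, ⟨hdb, hda⟩⟩
  rw [Sym2.mem_iff] at he hf
  rcases he with rfl | rfl <;> rcases hf with rfl | rfl <;> simp_all

lemma crosses_comm [NeZero n] {e f : Sym2 (ZMod n)} : Crosses n e f ↔ Crosses n f e := by
  obtain ⟨i, j, hij, hj, rfl⟩ := exists_eq_vertex_mk 0 e
  obtain ⟨k, l, hkl, hl, rfl⟩ := exists_eq_vertex_mk 0 f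
  rw [crosses_vertex_iff 0 hij hj hkl hl, crosses_vertex_iff 0 hkl hl hij hj]
  omega

end Chords

section Triangulations

open Finset

variable {n : ℕ} {T : Finset (Sym2 (ZMod n))}

lemma IsTriangulation.not_crosses (hT : IsTriangulation n T) {e f : Sym2 (ZMod n)}
    (he : e ∈ T) (hf : f ∈ T) : ¬ Crosses n e f := by
  by_cases hef : e = f
  · subst hef
    induction e using Sym2.ind with
    | _ x y => exact not_crosses_of_mem (Sym2.mem_mk_left x y) (Sym2.mem_mk_left x y)
  · exact hT.2.2 e he f hf hef

lemma IsTriangulation.not_interlaced (hT : IsTriangulation n T) (p : ZMod n) {i j k l : ℕ}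
    (hl : l < n) (he : s(vertex p i, vertex p j) ∈ T) (hf : s(vertex p k, vertex p l) ∈ T) :
    ¬ (i < k ∧ k < j ∧ j < l) := fun h =>
  hT.not_crosses he hf ((crosses_vertex_iff p (by omega) (by omega) (by omega) hl).2 (.inl h))

lemma IsTriangulation.insert_erase [NeZero n] (hT : IsTriangulation n T)
    {e e' : Sym2 (ZMod n)} (he : e ∈ T) (he' : IsChord n e') (he'T : e' ∉ T)
    (hcross : ∀ g ∈ T.erase e, ¬ Crosses n e' g) : IsTriangulation n (insert e' (T.erase e)) := by
  obtain ⟨hcard, hchord, hnc⟩ := hT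
  refine ⟨?_, ?_, ?_⟩
  · have := card_pos.2 ⟨e, he⟩
    rw [card_insert_of_notMem (fun h => he'T (mem_of_mem_erase h)), card_erase_of_mem he]
    omega
  · intro f hf
    rcases mem_insert.1 hf with rfl | hf
    exacts [he', hchord f (mem_of_mem_erase hf)]
  · intro f hf g hg hfg
    rcases mem_insert.1 hf with rfl | hf' <;> rcases mem_insert.1 hg with rfl | hg'
    · exact absurd rfl hfg
    · exact hcross g hg'
    · exact fun h => hcross f hf' (crosses_comm.1 h)
    · exact hnc f (mem_of_mem_erase hf') g (mem_of_mem_erase hg') hfg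

lemma flipAdj_insert_erase {e e' : Sym2 (ZMod n)} (he : e ∈ T) (he'T : e' ∉ T) :
    FlipAdj n T (insert e' (T.erase e)) := by
  have hdiff : symmDiff T (insert e' (T.erase e)) = {e, e'} := by
    ext f
    simp only [mem_symmDiff, mem_insert, mem_erase, mem_singleton]
    grind
  rw [FlipAdj, hdiff, card_pair (ne_of_mem_of_not_mem he he'T)]

end Triangulations

section Fan

open Finset

variable {n : ℕ} (p : ZMod n)

def fan (n : ℕ) (p : ZMod n) : Finset (Sym2 (ZMod n)) :=
  (Icc 2 (n - 2)).image fun t => s(p, vertex p t)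

lemma card_fan : (fan n p).card = n - 3 := by
  rw [fan, card_image_of_injOn, Nat.card_Icc]
  · omega
  · intro s hs t ht hst
    simp only [coe_Icc, Set.mem_Icc] at hs ht
    exact (vertex_inj p (by omega) (by omega)).1 (Sym2.congr_right.1 hst)

lemma eq_fan_of_forall_mem (hn : 1 < n) {T : Finset (Sym2 (ZMod n))} (hT : IsTriangulation n T)
    (hp : ∀ f ∈ T, p ∈ f) : T = fan n p := by
  have : NeZero n := ⟨by omega⟩
  refine eq_of_subset_of_card_le (fun f hf => ?_) (by rw [card_fan p, hT.1])
  obtain ⟨i, j, hij, hj, rfl⟩ := exists_eq_vertex_mk p f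
  have hi : i = 0 := by have := (mem_vertex_mk_iff p (by omega) hj).1 (hp _ hf); omega
  subst hi
  have := (isChord_vertex_iff (by omega) p hij hj).1 (hT.2.1 _ hf)
  exact mem_image.2 ⟨j, mem_Icc.2 (by omega), by rw [vertex_zero]⟩

end Fan

section Flip

open Finset

variable {n : ℕ} (p : ZMod n) {T : Finset (Sym2 (ZMod n))}

def span (p : ZMod n) : Sym2 (ZMod n) → ℕ :=
  Sym2.lift ⟨fun x y => Nat.dist (x - p).val (y - p).val, fun _ _ => Nat.dist_comm _ _⟩

lemma span_vertex_mk {i j : ℕ} (hij : i ≤ j) (hj : j < n) :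
    span p s(vertex p i, vertex p j) = j - i := by
  have hval {t : ℕ} (ht : t < n) : (vertex p t - p).val = t := by
    rw [vertex, add_sub_cancel_left, ZMod.val_cast_of_lt ht]
  simp only [span, Sym2.lift_mk]
  rw [hval (by omega), hval hj, Nat.dist_eq_sub_of_le hij]

lemma IsTriangulation.exists_apex (hT : IsTriangulation n T) {a b : ℕ} (ha : 0 < a)
    (hab : a + 2 ≤ b) (hb : b < n) (he : s(vertex p a, vertex p b) ∈ T)
    (hmax : ∀ i j, 0 < i → i ≤ j → j < n → s(vertex p i, vertex p j) ∈ T → j - i ≤ b - a) :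
    ∃ w, a < w ∧ w < b ∧ ∀ i j, 0 < i → j < n → s(vertex p i, vertex p j) ∈ T →
      i < w → w < j → i = a ∧ j = b := by
  -- `J.max'` is the apex: the last neighbour of `a` in `T` below `e`, or `a + 1` if none.
  set J := (Ioo a b).filter fun j => j = a + 1 ∨ s(vertex p a, vertex p j) ∈ T
  have hJ : J.Nonempty := ⟨a + 1, mem_filter.2 ⟨mem_Ioo.2 (by omega), .inl rfl⟩⟩
  obtain ⟨hw, hwT⟩ := mem_filter.1 (J.max'_mem hJ)
  rw [mem_Ioo] at hw
  refine ⟨J.max' hJ, hw.1, hw.2, fun i j hi hj hg hiw hwj => ?_⟩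
  have hspan := hmax i j hi (by omega) hj hg
  have hnest₁ := hT.not_interlaced p hb hg he
  have hnest₂ := hT.not_interlaced p hj he hg
  rcases lt_trichotomy i a with hia | rfl | hai
  · omega
  · refine ⟨rfl, by_contra fun hjb => ?_⟩
    have := J.le_max' j (mem_filter.2 ⟨mem_Ioo.2 (by omega), .inr hg⟩)
    omega
  · rcases hwT with hw1 | hwT
    · omega
    · exact absurd ⟨hai, hiw, hwj⟩ (hT.not_interlaced p hj hwT hg)

lemma IsTriangulation.exists_flip_to_vertex (hn : 1 < n) (hT : IsTriangulation n T)
    (hne : ∃ f ∈ T, p ∉ f) :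
    ∃ e ∈ T, p ∉ e ∧ ∃ e', p ∈ e' ∧ IsChord n e' ∧ e' ∉ T ∧ ∀ g ∈ T.erase e, ¬ Crosses n e' g := by
  have : NeZero n := ⟨by omega⟩
  obtain ⟨e, he, hmax⟩ := (T.filter (p ∉ ·)).exists_max_image (span p) (filter_nonempty_iff.2 hne)
  obtain ⟨heT, hpe⟩ := mem_filter.1 he
  obtain ⟨a, b, hab, hb, rfl⟩ := exists_eq_vertex_mk p e
  have ha : 0 < a := by have := (mem_vertex_mk_iff p (by omega) hb).not.1 hpe; omega
  have hab₂ := ((isChord_vertex_iff (by omega) p hab hb).1 (hT.2.1 _ heT)).1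
  obtain ⟨w, haw, hwb, hsep⟩ := hT.exists_apex p ha hab₂ hb heT fun i j hi hij hj hg => by
    have hpg : p ∉ s(vertex p i, vertex p j) := by rw [mem_vertex_mk_iff p (by omega) hj]; omega
    simpa only [span_vertex_mk p hij hj, span_vertex_mk p hab hb] using
      hmax _ (mem_filter.2 ⟨hg, hpg⟩)
  have hcross (i j : ℕ) (hij : i ≤ j) (hj : j < n) :
      Crosses n s(vertex p 0, vertex p w) s(vertex p i, vertex p j) ↔ 0 < i ∧ i < w ∧ w < j :=
    (crosses_vertex_iff p (Nat.zero_le w) (by omega) hij hj).trans (by omega)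
  refine ⟨_, heT, hpe, s(vertex p 0, vertex p w), by simp,
    (isChord_vertex_iff (by omega) p (Nat.zero_le w) (by omega)).2 (by omega),
    fun h => hT.not_crosses h heT ((hcross a b hab hb).2 ⟨ha, haw, hwb⟩), fun g hg => ?_⟩
  obtain ⟨hge, hgT⟩ := mem_erase.1 hg
  obtain ⟨i, j, hij, hj, rfl⟩ := exists_eq_vertex_mk p g
  rw [hcross i j hij hj]
  rintro ⟨hi, hiw, hwj⟩
  obtain ⟨rfl, rfl⟩ := hsep i j hi hj hgT hiw hwj
  exact hge rfl

lemma exists_flipStep_card_filter_lt (hn : 1 < n) {X : Finset (Sym2 (ZMod n))}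
    (hX : ∀ e ∈ X, p ∉ e) (hT : AvoidingTri n X T) (hne : ∃ f ∈ T, p ∉ f) :
    ∃ T', FlipStep n X T T' ∧ (T'.filter (p ∉ ·)).card < (T.filter (p ∉ ·)).card := by
  have : NeZero n := ⟨by omega⟩
  obtain ⟨e, he, hpe, e', hpe', he', he'T, hcross⟩ := hT.1.exists_flip_to_vertex p hn hne
  refine ⟨insert e' (T.erase e), ⟨hT, ⟨hT.1.insert_erase he he' he'T hcross, ?_⟩,
    flipAdj_insert_erase he he'T⟩, ?_⟩
  · intro x hx hxT
    rcases mem_insert.1 hxT with rfl | hxT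
    exacts [hX _ hx hpe', hT.2 x hx (mem_of_mem_erase hxT)]
  · rw [filter_insert, if_neg (not_not.2 hpe'), filter_erase]
    exact card_erase_lt_of_mem (mem_filter.2 ⟨he, hpe⟩)

end Flip

section FlipGraph

variable {n : ℕ} {X S T : Finset (Sym2 (ZMod n))}

lemma FlipStep.symm (h : FlipStep n X S T) : FlipStep n X T S :=
  ⟨h.2.1, h.1, by rw [FlipAdj, symmDiff_comm]; exact h.2.2⟩

lemma FlipConn.symm (h : FlipConn n X S T) : FlipConn n X T S :=
  Relation.ReflTransGen.mono (fun _ _ => FlipStep.symm) _ _ (Relation.ReflTransGen.swap _ _ h)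

end FlipGraph

theorem flipConn_fan {n : ℕ} (p : ZMod n) (hn : 1 < n) {X T : Finset (Sym2 (ZMod n))}
    (hX : ∀ e ∈ X, p ∉ e) (hT : AvoidingTri n X T) : FlipConn n X T (fan n p) := by
  by_cases hfan : ∀ f ∈ T, p ∈ f
  · rw [eq_fan_of_forall_mem p hn hT.1 hfan]
    exact .refl
  · push Not at hfan
    obtain ⟨T', hstep, hlt⟩ := exists_flipStep_card_filter_lt p hn hX hT hfan
    exact .head hstep (flipConn_fan p hn hX hstep.2.1)
termination_by (T.filter (p ∉ ·)).card

/-- If `X` is a flip cut set of the convex `n`-gon, then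
every vertex of the `n`-gon is an endpoint of some chord of `X`. -/
theorem flipCutSet_touches_every_vertex (n : ℕ) (hn : 3 ≤ n)
    (X : Finset (Sym2 (ZMod n))) (hX : IsFlipCutSet n X) :
    ∀ p : ZMod n, ∃ e ∈ X, p ∈ e := by
  intro p
  by_contra! hp
  have hconn {T} (hT : AvoidingTri n X T) := flipConn_fan p (by omega) hp hT
  exact hX.2 fun S T hS hT => (hconn hS).trans (hconn hT).symm

end FlipCut
end

section
/- For every integer n ≥ 6 there exists a set X of exactly n - 3 chords of the convex n-gon and a triangulation T avoiding X such that T is frozen in F_{-X} (no single flip applied to T yields a triangulation avoiding X) and there exists at least one other triangulation avoiding X; in particular, X is a flip cut set of size n - 3. -/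
namespace FlipCut

section Aux

variable {n : ℕ}

lemma cast_injn {a b : ℕ} (ha : a < n) (hb : b < n)
    (h : (a : ZMod n) = b) : a = b := by
  haveI : NeZero n := ⟨by omega⟩
  have := congrArg ZMod.val h
  rwa [ZMod.val_cast_of_lt ha, ZMod.val_cast_of_lt hb] at this

def dd (n a x : ℕ) : ℕ := if a ≤ x then x - a else x + (n - a)

lemma sub_val {a x : ℕ} (ha : a < n) (hx : x < n) :
    ((x : ZMod n) - a).val = dd n a x := by
  haveI : NeZero n := ⟨by omega⟩
  have h0 : ((n - a : ℕ) : ZMod n) = - (a : ZMod n) := by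
    rw [Nat.cast_sub ha.le, ZMod.natCast_self]; ring
  have h1 : ((x : ZMod n) - a) = ((x + (n - a) : ℕ) : ZMod n) := by
    rw [Nat.cast_add, h0]; ring
  rw [h1, ZMod.val_natCast, dd]
  split_ifs with h
  · have h2 : x + (n - a) = n + (x - a) := by omega
    rw [h2, Nat.add_mod_left, Nat.mod_eq_of_lt (by omega)]
  · rw [Nat.mod_eq_of_lt (by omega)]

lemma btw_iff {a x b : ℕ} (ha : a < n) (hx : x < n) (hb : b < n) :
    Btw n (a : ZMod n) (x : ZMod n) (b : ZMod n) ↔ 0 < dd n a x ∧ dd n a x < dd n a b := by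
  unfold Btw; rw [sub_val ha hx, sub_val ha hb]

lemma exists_repr (hn : 0 < n) (e : Sym2 (ZMod n)) (hd : ¬ e.IsDiag) :
    ∃ u v : ℕ, u < v ∧ v < n ∧ e = s((u : ZMod n), (v : ZMod n)) := by
  haveI : NeZero n := ⟨by omega⟩
  induction e using Sym2.ind with
  | _ x y =>
    rw [Sym2.mk_isDiag_iff] at hd
    have hx : ((x.val : ℕ) : ZMod n) = x := ZMod.natCast_rightInverse x
    have hy : ((y.val : ℕ) : ZMod n) = y := ZMod.natCast_rightInverse y
    rcases lt_trichotomy x.val y.val with h | h | h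
    · exact ⟨x.val, y.val, h, ZMod.val_lt y, by rw [hx, hy]⟩
    · exact absurd (ZMod.val_injective n h) hd
    · exact ⟨y.val, x.val, h, ZMod.val_lt x, by rw [hx, hy, Sym2.eq_swap]⟩

lemma sym2_eq_iff {a b c d : ℕ} (ha : a < n) (hb : b < n) (hc : c < n) (hd : d < n) :
    s((a : ZMod n), (b : ZMod n)) = s((c : ZMod n), (d : ZMod n)) ↔
      (a = c ∧ b = d) ∨ (a = d ∧ b = c) := by
  rw [Sym2.eq_iff]
  constructor
  · rintro (⟨h1, h2⟩ | ⟨h1, h2⟩)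
    · exact Or.inl ⟨cast_injn ha hc h1, cast_injn hb hd h2⟩
    · exact Or.inr ⟨cast_injn ha hd h1, cast_injn hb hc h2⟩
  · rintro (⟨rfl, rfl⟩ | ⟨rfl, rfl⟩)
    · exact Or.inl ⟨rfl, rfl⟩
    · exact Or.inr ⟨rfl, rfl⟩

lemma crosses_iff {u v p q : ℕ} (huv : u < v) (hv : v < n) (hpq : p < q) (hq : q < n) :
    Crosses n s((u : ZMod n), (v : ZMod n)) s((p : ZMod n), (q : ZMod n)) ↔
      (u < p ∧ p < v ∧ v < q) ∨ (p < u ∧ u < q ∧ q < v) := by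
  have hu : u < n := huv.trans hv
  have hp : p < n := hpq.trans hq
  constructor
  · rintro ⟨a, b, c, d, he, hf, h1, h2⟩
    rw [Sym2.eq_iff] at he hf
    rcases he with ⟨ha, hb⟩ | ⟨ha, hb⟩ <;> rcases hf with ⟨hc, hd⟩ | ⟨hc, hd⟩ <;>
      subst ha <;> subst hb <;> subst hc <;> subst hd
    · rw [btw_iff hu hp hv] at h1; rw [btw_iff hv hq hu] at h2
      simp only [dd] at h1 h2; split_ifs at h1 h2 <;> omega
    · rw [btw_iff hu hq hv] at h1; rw [btw_iff hv hp hu] at h2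
      simp only [dd] at h1 h2; split_ifs at h1 h2 <;> omega
    · rw [btw_iff hv hp hu] at h1; rw [btw_iff hu hq hv] at h2
      simp only [dd] at h1 h2; split_ifs at h1 h2 <;> omega
    · rw [btw_iff hv hq hu] at h1; rw [btw_iff hu hp hv] at h2
      simp only [dd] at h1 h2; split_ifs at h1 h2 <;> omega
  · rintro (⟨h1, h2, h3⟩ | ⟨h1, h2, h3⟩)
    · refine ⟨_, _, _, _, rfl, rfl, ?_, ?_⟩
      · rw [btw_iff hu hp hv]; simp only [dd]; split_ifs <;> omega
      · rw [btw_iff hv hq hu]; simp only [dd]; split_ifs <;> omega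
    · refine ⟨(u : ZMod n), (v : ZMod n), (q : ZMod n), (p : ZMod n), rfl,
        Sym2.eq_swap.symm, ?_, ?_⟩
      · rw [btw_iff hu hq hv]; simp only [dd]; split_ifs <;> omega
      · rw [btw_iff hv hp hu]; simp only [dd]; split_ifs <;> omega

lemma neg_one_cast (hn : 0 < n) : ((n - 1 : ℕ) : ZMod n) = -1 := by
  haveI : NeZero n := ⟨by omega⟩
  rw [Nat.cast_sub (by omega), ZMod.natCast_self, Nat.cast_one]; ring

lemma isChord_iff {u v : ℕ} (huv : u < v) (hv : v < n) :
    IsChord n s((u : ZMod n), (v : ZMod n)) ↔ u + 2 ≤ v ∧ ¬(u = 0 ∧ v = n - 1) := by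
  have hu : u < n := huv.trans hv
  constructor
  · rintro ⟨hd, hadj⟩
    rw [Sym2.mk_isDiag_iff] at hd
    have h := hadj _ (Sym2.mem_mk_left _ _) _ (Sym2.mem_mk_right _ _) hd
    constructor
    · by_contra hc
      have hv1 : v = u + 1 := by omega
      exact h.1 (by rw [hv1]; push_cast; ring)
    · rintro ⟨rfl, rfl⟩
      exact h.2 (by rw [neg_one_cast (by omega)]; push_cast; ring)
  · rintro ⟨h2, hne⟩
    constructor
    · rw [Sym2.mk_isDiag_iff]
      intro h; exact absurd (cast_injn hu hv h) (by omega)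
    · intro a ha b hb hab
      rw [Sym2.mem_iff] at ha hb
      have key : ∀ x y : ℕ, x < n → y < n → x ≠ y → ¬(x = 0 ∧ y = n - 1) →
          ¬(y = 0 ∧ x = n - 1) → x + 1 ≠ y → x ≠ y + 1 →
          ((y : ZMod n) ≠ (x : ZMod n) + 1 ∧ (y : ZMod n) ≠ (x : ZMod n) - 1) := by
        intro x y hx hy hxy hc1 hc2 ha1 ha2
        constructor
        · intro h
          rcases Nat.lt_or_ge (x + 1) n with h1 | h1
          · rw [show ((x : ZMod n) + 1) = ((x + 1 : ℕ) : ZMod n) by push_cast; ring] at h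
            exact ha1 (cast_injn h1 hy h.symm)
          · have hx1 : x = n - 1 := by omega
            rw [show ((x : ZMod n) + 1) = ((0 : ℕ) : ZMod n) by
              rw [hx1]; push_cast [neg_one_cast (by omega : 0 < n)]; ring] at h
            have := cast_injn hy (by omega) h
            exact hc2 ⟨this, hx1⟩
        · intro h
          rcases Nat.eq_zero_or_pos x with h1 | h1
          · rw [show ((x : ZMod n) - 1) = ((n - 1 : ℕ) : ZMod n) by
              rw [h1, neg_one_cast (by omega : 0 < n)]; push_cast; ring] at h
            have := cast_injn hy (by omega) h
            exact hc1 ⟨h1, this⟩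
          · rw [show ((x : ZMod n) - 1) = ((x - 1 : ℕ) : ZMod n) by
              rw [Nat.cast_sub (by omega)]; push_cast; ring] at h
            have := cast_injn hy (by omega) h
            omega
      rcases ha with rfl | rfl <;> rcases hb with rfl | rfl
      · exact absurd rfl hab
      · exact key u v hu hv (by omega) (by omega) (by omega) (by omega) (by omega)
      · exact key v u hv hu (by omega) (by omega) (by omega) (by omega) (by omega)
      · exact absurd rfl hab

/-- The frozen triangulation: triangle `{0,2,4}` plus the fan from `0`. -/
def TT (n : ℕ) : Finset (Sym2 (ZMod n)) :=
  insert s(((0 : ℕ) : ZMod n), ((2 : ℕ) : ZMod n))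
    (insert s(((2 : ℕ) : ZMod n), ((4 : ℕ) : ZMod n))
      ((Finset.Ico 4 (n - 1)).image fun i => s(((0 : ℕ) : ZMod n), ((i : ℕ) : ZMod n))))

/-- The blocking set: the flip targets of all chords of `TT`. -/
def XX (n : ℕ) : Finset (Sym2 (ZMod n)) :=
  insert s(((0 : ℕ) : ZMod n), ((3 : ℕ) : ZMod n))
    (insert s(((1 : ℕ) : ZMod n), ((4 : ℕ) : ZMod n))
      (insert s(((2 : ℕ) : ZMod n), ((5 : ℕ) : ZMod n))
        ((Finset.Ico 5 (n - 1)).image fun i =>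
          s(((i - 1 : ℕ) : ZMod n), ((i + 1 : ℕ) : ZMod n)))))

/-- A second triangulation avoiding `XX`. -/
def TT' (n : ℕ) : Finset (Sym2 (ZMod n)) :=
  insert s(((1 : ℕ) : ZMod n), ((3 : ℕ) : ZMod n))
    (insert s(((3 : ℕ) : ZMod n), ((5 : ℕ) : ZMod n))
      (insert s(((1 : ℕ) : ZMod n), ((5 : ℕ) : ZMod n))
        ((Finset.Ico 6 n).image fun i => s(((1 : ℕ) : ZMod n), ((i : ℕ) : ZMod n)))))

lemma mem_TT (hn : 6 ≤ n) {e : Sym2 (ZMod n)} :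
    e ∈ TT n ↔ ∃ a b : ℕ, a < b ∧ b < n ∧ e = s((a : ZMod n), (b : ZMod n)) ∧
      ((a = 0 ∧ b = 2) ∨ (a = 2 ∧ b = 4) ∨ (a = 0 ∧ 4 ≤ b ∧ b ≤ n - 2)) := by
  unfold TT
  simp only [Finset.mem_insert, Finset.mem_image, Finset.mem_Ico]
  constructor
  · rintro (rfl | rfl | ⟨i, ⟨hi1, hi2⟩, rfl⟩)
    · exact ⟨0, 2, by omega, by omega, rfl, Or.inl ⟨rfl, rfl⟩⟩
    · exact ⟨2, 4, by omega, by omega, rfl, Or.inr (Or.inl ⟨rfl, rfl⟩)⟩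
    · exact ⟨0, i, by omega, by omega, rfl, Or.inr (Or.inr ⟨rfl, by omega, by omega⟩)⟩
  · rintro ⟨a, b, hab, hbn, rfl, (⟨rfl, rfl⟩ | ⟨rfl, rfl⟩ | ⟨rfl, hb1, hb2⟩)⟩
    · exact Or.inl rfl
    · exact Or.inr (Or.inl rfl)
    · exact Or.inr (Or.inr ⟨b, ⟨hb1, by omega⟩, rfl⟩)

lemma mem_XX (hn : 6 ≤ n) {e : Sym2 (ZMod n)} :
    e ∈ XX n ↔ ∃ a b : ℕ, a < b ∧ b < n ∧ e = s((a : ZMod n), (b : ZMod n)) ∧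
      ((a = 0 ∧ b = 3) ∨ (a = 1 ∧ b = 4) ∨ (a = 2 ∧ b = 5) ∨
        (4 ≤ a ∧ b = a + 2 ∧ b ≤ n - 1)) := by
  unfold XX
  simp only [Finset.mem_insert, Finset.mem_image, Finset.mem_Ico]
  constructor
  · rintro (rfl | rfl | rfl | ⟨i, ⟨hi1, hi2⟩, rfl⟩)
    · exact ⟨0, 3, by omega, by omega, rfl, Or.inl ⟨rfl, rfl⟩⟩
    · exact ⟨1, 4, by omega, by omega, rfl, Or.inr (Or.inl ⟨rfl, rfl⟩)⟩
    · exact ⟨2, 5, by omega, by omega, rfl, Or.inr (Or.inr (Or.inl ⟨rfl, rfl⟩))⟩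
    · exact ⟨i - 1, i + 1, by omega, by omega, rfl,
        Or.inr (Or.inr (Or.inr ⟨by omega, by omega, by omega⟩))⟩
  · rintro ⟨a, b, hab, hbn, rfl, (⟨rfl, rfl⟩ | ⟨rfl, rfl⟩ | ⟨rfl, rfl⟩ | ⟨ha4, rfl, hb2⟩)⟩
    · exact Or.inl rfl
    · exact Or.inr (Or.inl rfl)
    · exact Or.inr (Or.inr (Or.inl rfl))
    · refine Or.inr (Or.inr (Or.inr ⟨a + 1, ⟨by omega, by omega⟩, ?_⟩))
      have e1 : a + 1 - 1 = a := by omega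
      have e2 : a + 1 + 1 = a + 2 := by omega
      rw [e1, e2]

lemma mem_TT' (hn : 6 ≤ n) {e : Sym2 (ZMod n)} :
    e ∈ TT' n ↔ ∃ a b : ℕ, a < b ∧ b < n ∧ e = s((a : ZMod n), (b : ZMod n)) ∧
      ((a = 1 ∧ b = 3) ∨ (a = 3 ∧ b = 5) ∨ (a = 1 ∧ b = 5) ∨
        (a = 1 ∧ 6 ≤ b ∧ b ≤ n - 1)) := by
  unfold TT'
  simp only [Finset.mem_insert, Finset.mem_image, Finset.mem_Ico]
  constructor
  · rintro (rfl | rfl | rfl | ⟨i, ⟨hi1, hi2⟩, rfl⟩)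
    · exact ⟨1, 3, by omega, by omega, rfl, Or.inl ⟨rfl, rfl⟩⟩
    · exact ⟨3, 5, by omega, by omega, rfl, Or.inr (Or.inl ⟨rfl, rfl⟩)⟩
    · exact ⟨1, 5, by omega, by omega, rfl, Or.inr (Or.inr (Or.inl ⟨rfl, rfl⟩))⟩
    · exact ⟨1, i, by omega, by omega, rfl, Or.inr (Or.inr (Or.inr ⟨rfl, by omega, by omega⟩))⟩
  · rintro ⟨a, b, hab, hbn, rfl, (⟨rfl, rfl⟩ | ⟨rfl, rfl⟩ | ⟨rfl, rfl⟩ | ⟨rfl, hb1, hb2⟩)⟩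
    · exact Or.inl rfl
    · exact Or.inr (Or.inl rfl)
    · exact Or.inr (Or.inr (Or.inl rfl))
    · exact Or.inr (Or.inr (Or.inr ⟨b, ⟨hb1, by omega⟩, rfl⟩))

lemma card_TT (hn : 6 ≤ n) : (TT n).card = n - 3 := by
  have h1 : Set.InjOn (fun i : ℕ => s(((0 : ℕ) : ZMod n), ((i : ℕ) : ZMod n)))
      (Finset.Ico 4 (n - 1)) := by
    intro i hi j hj h
    simp only [Finset.coe_Ico, Set.mem_Ico] at hi hj
    rcases (sym2_eq_iff (by omega) (by omega) (by omega) (by omega)).mp h with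
      ⟨_, h2⟩ | ⟨h2, h3⟩ <;> omega
  have h2 : s(((2 : ℕ) : ZMod n), ((4 : ℕ) : ZMod n)) ∉
      (Finset.Ico 4 (n - 1)).image fun i => s(((0 : ℕ) : ZMod n), ((i : ℕ) : ZMod n)) := by
    intro h
    obtain ⟨i, hi, heq⟩ := Finset.mem_image.mp h
    rw [Finset.mem_Ico] at hi
    rcases (sym2_eq_iff (by omega) (by omega) (by omega) (by omega)).mp heq with
      ⟨h3, h4⟩ | ⟨h3, h4⟩ <;> omega
  have h3 : s(((0 : ℕ) : ZMod n), ((2 : ℕ) : ZMod n)) ∉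
      insert s(((2 : ℕ) : ZMod n), ((4 : ℕ) : ZMod n))
        ((Finset.Ico 4 (n - 1)).image fun i => s(((0 : ℕ) : ZMod n), ((i : ℕ) : ZMod n))) := by
    intro h
    rcases Finset.mem_insert.mp h with heq | h
    · rcases (sym2_eq_iff (by omega) (by omega) (by omega) (by omega)).mp heq with
        ⟨h3, h4⟩ | ⟨h3, h4⟩ <;> omega
    · obtain ⟨i, hi, heq⟩ := Finset.mem_image.mp h
      rw [Finset.mem_Ico] at hi
      rcases (sym2_eq_iff (by omega) (by omega) (by omega) (by omega)).mp heq with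
        ⟨h3, h4⟩ | ⟨h3, h4⟩ <;> omega
  rw [TT, Finset.card_insert_of_notMem h3, Finset.card_insert_of_notMem h2,
    Finset.card_image_of_injOn h1, Nat.card_Ico]
  omega

lemma card_XX (hn : 6 ≤ n) : (XX n).card = n - 3 := by
  have h1 : Set.InjOn (fun i : ℕ => s(((i - 1 : ℕ) : ZMod n), ((i + 1 : ℕ) : ZMod n)))
      (Finset.Ico 5 (n - 1)) := by
    intro i hi j hj h
    simp only [Finset.coe_Ico, Set.mem_Ico] at hi hj
    rcases (sym2_eq_iff (by omega) (by omega) (by omega) (by omega)).mp h with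
      ⟨h2, h3⟩ | ⟨h2, h3⟩ <;> omega
  have h2 : s(((2 : ℕ) : ZMod n), ((5 : ℕ) : ZMod n)) ∉
      (Finset.Ico 5 (n - 1)).image fun i =>
        s(((i - 1 : ℕ) : ZMod n), ((i + 1 : ℕ) : ZMod n)) := by
    intro h
    obtain ⟨i, hi, heq⟩ := Finset.mem_image.mp h
    rw [Finset.mem_Ico] at hi
    rcases (sym2_eq_iff (by omega) (by omega) (by omega) (by omega)).mp heq with
      ⟨h3, h4⟩ | ⟨h3, h4⟩ <;> omega
  have h3 : s(((1 : ℕ) : ZMod n), ((4 : ℕ) : ZMod n)) ∉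
      insert s(((2 : ℕ) : ZMod n), ((5 : ℕ) : ZMod n))
        ((Finset.Ico 5 (n - 1)).image fun i =>
          s(((i - 1 : ℕ) : ZMod n), ((i + 1 : ℕ) : ZMod n))) := by
    intro h
    rcases Finset.mem_insert.mp h with heq | h
    · rcases (sym2_eq_iff (by omega) (by omega) (by omega) (by omega)).mp heq with
        ⟨h3, h4⟩ | ⟨h3, h4⟩ <;> omega
    · obtain ⟨i, hi, heq⟩ := Finset.mem_image.mp h
      rw [Finset.mem_Ico] at hi
      rcases (sym2_eq_iff (by omega) (by omega) (by omega) (by omega)).mp heq with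
        ⟨h3, h4⟩ | ⟨h3, h4⟩ <;> omega
  have h4 : s(((0 : ℕ) : ZMod n), ((3 : ℕ) : ZMod n)) ∉
      insert s(((1 : ℕ) : ZMod n), ((4 : ℕ) : ZMod n))
        (insert s(((2 : ℕ) : ZMod n), ((5 : ℕ) : ZMod n))
          ((Finset.Ico 5 (n - 1)).image fun i =>
            s(((i - 1 : ℕ) : ZMod n), ((i + 1 : ℕ) : ZMod n)))) := by
    intro h
    rcases Finset.mem_insert.mp h with heq | h
    · rcases (sym2_eq_iff (by omega) (by omega) (by omega) (by omega)).mp heq with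
        ⟨h3, h4⟩ | ⟨h3, h4⟩ <;> omega
    rcases Finset.mem_insert.mp h with heq | h
    · rcases (sym2_eq_iff (by omega) (by omega) (by omega) (by omega)).mp heq with
        ⟨h3, h4⟩ | ⟨h3, h4⟩ <;> omega
    · obtain ⟨i, hi, heq⟩ := Finset.mem_image.mp h
      rw [Finset.mem_Ico] at hi
      rcases (sym2_eq_iff (by omega) (by omega) (by omega) (by omega)).mp heq with
        ⟨h3, h4⟩ | ⟨h3, h4⟩ <;> omega
  rw [XX, Finset.card_insert_of_notMem h4, Finset.card_insert_of_notMem h3,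
    Finset.card_insert_of_notMem h2, Finset.card_image_of_injOn h1, Nat.card_Ico]
  omega

lemma card_TT' (hn : 6 ≤ n) : (TT' n).card = n - 3 := by
  have h1 : Set.InjOn (fun i : ℕ => s(((1 : ℕ) : ZMod n), ((i : ℕ) : ZMod n)))
      (Finset.Ico 6 n) := by
    intro i hi j hj h
    simp only [Finset.coe_Ico, Set.mem_Ico] at hi hj
    rcases (sym2_eq_iff (by omega) (by omega) (by omega) (by omega)).mp h with
      ⟨_, h2⟩ | ⟨h2, h3⟩ <;> omega
  have h2 : s(((1 : ℕ) : ZMod n), ((5 : ℕ) : ZMod n)) ∉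
      (Finset.Ico 6 n).image fun i => s(((1 : ℕ) : ZMod n), ((i : ℕ) : ZMod n)) := by
    intro h
    obtain ⟨i, hi, heq⟩ := Finset.mem_image.mp h
    rw [Finset.mem_Ico] at hi
    rcases (sym2_eq_iff (by omega) (by omega) (by omega) (by omega)).mp heq with
      ⟨h3, h4⟩ | ⟨h3, h4⟩ <;> omega
  have h3 : s(((3 : ℕ) : ZMod n), ((5 : ℕ) : ZMod n)) ∉
      insert s(((1 : ℕ) : ZMod n), ((5 : ℕ) : ZMod n))
        ((Finset.Ico 6 n).image fun i => s(((1 : ℕ) : ZMod n), ((i : ℕ) : ZMod n))) := by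
    intro h
    rcases Finset.mem_insert.mp h with heq | h
    · rcases (sym2_eq_iff (by omega) (by omega) (by omega) (by omega)).mp heq with
        ⟨h3, h4⟩ | ⟨h3, h4⟩ <;> omega
    · obtain ⟨i, hi, heq⟩ := Finset.mem_image.mp h
      rw [Finset.mem_Ico] at hi
      rcases (sym2_eq_iff (by omega) (by omega) (by omega) (by omega)).mp heq with
        ⟨h3, h4⟩ | ⟨h3, h4⟩ <;> omega
  have h4 : s(((1 : ℕ) : ZMod n), ((3 : ℕ) : ZMod n)) ∉
      insert s(((3 : ℕ) : ZMod n), ((5 : ℕ) : ZMod n))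
        (insert s(((1 : ℕ) : ZMod n), ((5 : ℕ) : ZMod n))
          ((Finset.Ico 6 n).image fun i => s(((1 : ℕ) : ZMod n), ((i : ℕ) : ZMod n)))) := by
    intro h
    rcases Finset.mem_insert.mp h with heq | h
    · rcases (sym2_eq_iff (by omega) (by omega) (by omega) (by omega)).mp heq with
        ⟨h3, h4⟩ | ⟨h3, h4⟩ <;> omega
    rcases Finset.mem_insert.mp h with heq | h
    · rcases (sym2_eq_iff (by omega) (by omega) (by omega) (by omega)).mp heq with
        ⟨h3, h4⟩ | ⟨h3, h4⟩ <;> omega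
    · obtain ⟨i, hi, heq⟩ := Finset.mem_image.mp h
      rw [Finset.mem_Ico] at hi
      rcases (sym2_eq_iff (by omega) (by omega) (by omega) (by omega)).mp heq with
        ⟨h3, h4⟩ | ⟨h3, h4⟩ <;> omega
  rw [TT', Finset.card_insert_of_notMem h4, Finset.card_insert_of_notMem h3,
    Finset.card_insert_of_notMem h2, Finset.card_image_of_injOn h1, Nat.card_Ico]
  omega

end Aux


section Main

variable {n : ℕ}

lemma TT_tri (hn : 6 ≤ n) : IsTriangulation n (TT n) := by
  refine ⟨card_TT hn, ?_, ?_⟩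
  · intro e he
    obtain ⟨a, b, hab, hbn, rfl, hp⟩ := (mem_TT hn).mp he
    rw [isChord_iff hab hbn]; omega
  · intro e he f hf hne hc
    obtain ⟨a, b, hab, hbn, rfl, hp⟩ := (mem_TT hn).mp he
    obtain ⟨c, d, hcd, hdn, rfl, hq⟩ := (mem_TT hn).mp hf
    rw [crosses_iff hab hbn hcd hdn] at hc
    omega

lemma TT'_tri (hn : 6 ≤ n) : IsTriangulation n (TT' n) := by
  refine ⟨card_TT' hn, ?_, ?_⟩
  · intro e he
    obtain ⟨a, b, hab, hbn, rfl, hp⟩ := (mem_TT' hn).mp he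
    rw [isChord_iff hab hbn]; omega
  · intro e he f hf hne hc
    obtain ⟨a, b, hab, hbn, rfl, hp⟩ := (mem_TT' hn).mp he
    obtain ⟨c, d, hcd, hdn, rfl, hq⟩ := (mem_TT' hn).mp hf
    rw [crosses_iff hab hbn hcd hdn] at hc
    omega

lemma TT_avoids (hn : 6 ≤ n) : Avoids n (TT n) (XX n) := by
  intro e heX heT
  obtain ⟨a, b, hab, hbn, rfl, hp⟩ := (mem_XX hn).mp heX
  obtain ⟨c, d, hcd, hdn, heq, hq⟩ := (mem_TT hn).mp heT
  rcases (sym2_eq_iff (hab.trans hbn) hbn (hcd.trans hdn) hdn).mp heq with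
    ⟨h1, h2⟩ | ⟨h1, h2⟩ <;> omega

lemma TT'_avoids (hn : 6 ≤ n) : Avoids n (TT' n) (XX n) := by
  intro e heX heT
  obtain ⟨a, b, hab, hbn, rfl, hp⟩ := (mem_XX hn).mp heX
  obtain ⟨c, d, hcd, hdn, heq, hq⟩ := (mem_TT' hn).mp heT
  rcases (sym2_eq_iff (hab.trans hbn) hbn (hcd.trans hdn) hdn).mp heq with
    ⟨h1, h2⟩ | ⟨h1, h2⟩ <;> omega

lemma TT'_ne (hn : 6 ≤ n) : TT' n ≠ TT n := by
  intro h
  have h13 : s(((1 : ℕ) : ZMod n), ((3 : ℕ) : ZMod n)) ∈ TT' n :=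
    (mem_TT' hn).mpr ⟨1, 3, by omega, by omega, rfl, Or.inl ⟨rfl, rfl⟩⟩
  rw [h, mem_TT hn] at h13
  obtain ⟨a, b, hab, hbn, heq, hp⟩ := h13
  rcases (sym2_eq_iff (by omega) (by omega) (hab.trans hbn) hbn).mp heq with
    ⟨h1, h2⟩ | ⟨h1, h2⟩ <;> omega

lemma master (hn : 6 ≤ n) {u v : ℕ} (huv : u < v) (hvn : v < n)
    (hch : u + 2 ≤ v) (hch2 : ¬(u = 0 ∧ v = n - 1))
    {e : Sym2 (ZMod n)} (he : e ∈ TT n)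
    (hcomp : ∀ g ∈ TT n, g ≠ e → ¬ Crosses n s((u : ZMod n), (v : ZMod n)) g) :
    s((u : ZMod n), (v : ZMod n)) ∈ TT n ∨ s((u : ZMod n), (v : ZMod n)) ∈ XX n := by
  have m02 : s(((0 : ℕ) : ZMod n), ((2 : ℕ) : ZMod n)) ∈ TT n :=
    (mem_TT hn).mpr ⟨0, 2, by omega, by omega, rfl, Or.inl ⟨rfl, rfl⟩⟩
  have m24 : s(((2 : ℕ) : ZMod n), ((4 : ℕ) : ZMod n)) ∈ TT n :=
    (mem_TT hn).mpr ⟨2, 4, by omega, by omega, rfl, Or.inr (Or.inl ⟨rfl, rfl⟩)⟩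
  have m0i : ∀ i : ℕ, 4 ≤ i → i ≤ n - 2 →
      s(((0 : ℕ) : ZMod n), ((i : ℕ) : ZMod n)) ∈ TT n := fun i h1 h2 =>
    (mem_TT hn).mpr ⟨0, i, by omega, by omega, rfl, Or.inr (Or.inr ⟨rfl, h1, h2⟩)⟩
  have mX03 : s(((0 : ℕ) : ZMod n), ((3 : ℕ) : ZMod n)) ∈ XX n :=
    (mem_XX hn).mpr ⟨0, 3, by omega, by omega, rfl, Or.inl ⟨rfl, rfl⟩⟩
  have mX14 : s(((1 : ℕ) : ZMod n), ((4 : ℕ) : ZMod n)) ∈ XX n :=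
    (mem_XX hn).mpr ⟨1, 4, by omega, by omega, rfl, Or.inr (Or.inl ⟨rfl, rfl⟩)⟩
  have mX25 : s(((2 : ℕ) : ZMod n), ((5 : ℕ) : ZMod n)) ∈ XX n :=
    (mem_XX hn).mpr ⟨2, 5, by omega, by omega, rfl, Or.inr (Or.inr (Or.inl ⟨rfl, rfl⟩))⟩
  obtain ⟨a, b, hab, hbn, rfl, hp⟩ := (mem_TT hn).mp he
  have hns : ∀ p q : ℕ, p < q → q < n → s((p : ZMod n), (q : ZMod n)) ∈ TT n →
      ¬((p = a ∧ q = b) ∨ (p = b ∧ q = a)) →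
      ¬((u < p ∧ p < v ∧ v < q) ∨ (p < u ∧ u < q ∧ q < v)) := by
    intro p q h1 h2 hm hne hsep
    exact hcomp _ hm
      (fun h => hne ((sym2_eq_iff (h1.trans h2) h2 (hab.trans hbn) hbn).mp h))
      ((crosses_iff huv hvn h1 h2).mpr hsep)
  rcases hp with ⟨rfl, rfl⟩ | ⟨rfl, rfl⟩ | ⟨rfl, hb4, hbn2⟩
  · -- e = s(0,2)
    have F1 := hns 2 4 (by omega) (by omega) m24 (by omega)
    have F2 : ∀ i : ℕ, 4 ≤ i → i ≤ n - 2 →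
        ¬((u < 0 ∧ 0 < v ∧ v < i) ∨ (0 < u ∧ u < i ∧ i < v)) :=
      fun i h1 h2 => hns 0 i (by omega) (by omega) (m0i i h1 h2) (by omega)
    by_cases hu0 : u = 0
    · subst hu0
      by_cases hv2 : v = 2
      · subst hv2; exact Or.inl m02
      · by_cases hv3 : v = 3
        · exact (F1 (by omega)).elim
        · exact Or.inl (m0i v (by omega) (by omega))
    · by_cases hv4 : v ≤ 4
      · by_cases hu1 : u = 1
        · by_cases hvv : v = 4
          · subst hu1; subst hvv; exact Or.inr mX14
          · exact (F1 (by omega)).elim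
        · have hu2 : u = 2 := by omega
          have hvv : v = 4 := by omega
          subst hu2; subst hvv; exact Or.inl m24
      · exfalso
        by_cases hu4 : u ≤ 3
        · exact F2 4 (by omega) (by omega) (by omega)
        · exact F2 (u + 1) (by omega) (by omega) (by omega)
  · -- e = s(2,4)
    have F1 := hns 0 2 (by omega) (by omega) m02 (by omega)
    have F2 : ∀ i : ℕ, 4 ≤ i → i ≤ n - 2 →
        ¬((u < 0 ∧ 0 < v ∧ v < i) ∨ (0 < u ∧ u < i ∧ i < v)) :=
      fun i h1 h2 => hns 0 i (by omega) (by omega) (m0i i h1 h2) (by omega)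
    by_cases hu0 : u = 0
    · subst hu0
      by_cases hv2 : v = 2
      · subst hv2; exact Or.inl m02
      · by_cases hv3 : v = 3
        · subst hv3; exact Or.inr mX03
        · exact Or.inl (m0i v (by omega) (by omega))
    · by_cases hu1 : u = 1
      · exact (F1 (by omega)).elim
      · by_cases hu2 : u = 2
        · by_cases hvv : v = 4
          · subst hu2; subst hvv; exact Or.inl m24
          · exact (F2 4 (by omega) (by omega) (by omega)).elim
        · by_cases hu3 : u = 3
          · exact (F2 4 (by omega) (by omega) (by omega)).elim
          · exact (F2 (u + 1) (by omega) (by omega) (by omega)).elim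
  · -- e = s(0,b), 4 ≤ b ≤ n-2
    have F0 := hns 0 2 (by omega) (by omega) m02 (by omega)
    have F1 := hns 2 4 (by omega) (by omega) m24 (by omega)
    have F2 : ∀ i : ℕ, 4 ≤ i → i ≤ n - 2 → i ≠ b →
        ¬((u < 0 ∧ 0 < v ∧ v < i) ∨ (0 < u ∧ u < i ∧ i < v)) :=
      fun i h1 h2 h3 => hns 0 i (by omega) (by omega) (m0i i h1 h2) (by omega)
    by_cases hu0 : u = 0
    · subst hu0
      by_cases hv2 : v = 2
      · subst hv2; exact Or.inl m02
      · by_cases hv3 : v = 3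
        · exact (F1 (by omega)).elim
        · exact Or.inl (m0i v (by omega) (by omega))
    · by_cases hu1 : u = 1
      · exact (F0 (by omega)).elim
      · by_cases hu2 : u = 2
        · subst hu2
          by_cases hvv : v = 4
          · subst hvv; exact Or.inl m24
          · by_cases hbk : b = 4
            · by_cases hv5 : v = 5
              · subst hv5; exact Or.inr mX25
              · exact (F2 5 (by omega) (by omega) (by omega) (by omega)).elim
            · exact (F2 4 (by omega) (by omega) (by omega) (by omega)).elim
        · by_cases hu3 : u = 3
          · exact (F1 (by omega)).elim
          · -- u ≥ 4
            by_cases hk : u + 1 = b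
            · by_cases hv : v = b + 1
              · exact Or.inr ((mem_XX hn).mpr ⟨u, v, huv, hvn, rfl,
                  Or.inr (Or.inr (Or.inr ⟨by omega, by omega, by omega⟩))⟩)
              · exact (F2 (v - 1) (by omega) (by omega) (by omega) (by omega)).elim
            · exact (F2 (u + 1) (by omega) (by omega) (by omega) (by omega)).elim

lemma frozen (hn : 6 ≤ n) :
    ∀ T'', AvoidingTri n (XX n) T'' → ¬ FlipAdj n (TT n) T'' := by
  intro T'' hAv hadj
  obtain ⟨⟨hcard, hch, hnc⟩, hav⟩ := hAv
  unfold FlipAdj at hadj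
  have hTcard : (TT n).card = n - 3 := card_TT hn
  have hd1 : ((TT n) \ T'').card + ((TT n) ∩ T'').card = (TT n).card :=
    Finset.card_sdiff_add_card_inter _ _
  have hd2 : (T'' \ (TT n)).card + (T'' ∩ (TT n)).card = T''.card :=
    Finset.card_sdiff_add_card_inter _ _
  have hinter : ((TT n) ∩ T'').card = (T'' ∩ (TT n)).card := by rw [Finset.inter_comm]
  have hsymm : (symmDiff (TT n) T'').card = ((TT n) \ T'').card + (T'' \ (TT n)).card := by
    rw [symmDiff_def, Finset.sup_eq_union,
      Finset.card_union_of_disjoint (disjoint_sdiff_sdiff)]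
  have h1 : ((TT n) \ T'').card = 1 ∧ (T'' \ (TT n)).card = 1 := by omega
  obtain ⟨e, he⟩ := Finset.card_eq_one.mp h1.1
  obtain ⟨f, hf⟩ := Finset.card_eq_one.mp h1.2
  have hfT : f ∈ T'' ∧ f ∉ TT n := by
    have h := hf ▸ Finset.mem_singleton_self f
    exact Finset.mem_sdiff.mp h
  have heT : e ∈ TT n ∧ e ∉ T'' := by
    have h := he ▸ Finset.mem_singleton_self e
    exact Finset.mem_sdiff.mp h
  have hsub : ∀ g ∈ TT n, g ≠ e → g ∈ T'' := by
    intro g hg hge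
    by_contra hgT
    have h := Finset.mem_sdiff.mpr ⟨hg, hgT⟩
    rw [he] at h
    exact hge (Finset.mem_singleton.mp h)
  have hchf := hch f hfT.1
  obtain ⟨u, v, huv, hvn, hrepr⟩ := exists_repr (by omega) f hchf.1
  rw [hrepr] at hchf
  have hcc := (isChord_iff huv hvn).mp hchf
  have hcomp : ∀ g ∈ TT n, g ≠ e → ¬ Crosses n s((u : ZMod n), (v : ZMod n)) g := by
    intro g hg hge hcr
    have hgT'' := hsub g hg hge
    have hfg : f ≠ g := fun h => hfT.2 (h ▸ hg)
    exact hnc f hfT.1 g hgT'' hfg (by rwa [hrepr])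
  rcases master hn huv hvn hcc.1 hcc.2 heT.1 hcomp with hm | hm
  · exact hfT.2 (by rwa [hrepr])
  · exact hav _ hm (by rw [← hrepr]; exact hfT.1)

lemma XX_chords (hn : 6 ≤ n) : ∀ e ∈ XX n, IsChord n e := by
  intro e he
  obtain ⟨a, b, hab, hbn, rfl, hp⟩ := (mem_XX hn).mp he
  rw [isChord_iff hab hbn]; omega

end Main

/-- For every `n ≥ 6` there is a set `X` of exactly `n - 3`
chords and a triangulation `T` avoiding `X` that is frozen in `F₋ₓ` (no flip
from `T` yields a triangulation avoiding `X`), while some other triangulation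
avoiding `X` exists; in particular `X` is a flip cut set of size `n - 3`. -/
theorem exists_frozen_flipCutSet (n : ℕ) (hn : 6 ≤ n) :
    ∃ (X T : Finset (Sym2 (ZMod n))),
      (∀ e ∈ X, IsChord n e) ∧ X.card = n - 3 ∧
      AvoidingTri n X T ∧
      (∀ T', AvoidingTri n X T' → ¬ FlipAdj n T T') ∧
      (∃ T', AvoidingTri n X T' ∧ T' ≠ T) ∧
      IsFlipCutSet n X := by
  refine ⟨XX n, TT n, XX_chords hn, card_XX hn, ⟨TT_tri hn, TT_avoids hn⟩, frozen hn,
    ⟨TT' n, ⟨TT'_tri hn, TT'_avoids hn⟩, TT'_ne hn⟩, XX_chords hn, ?_⟩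
  intro hconn
  have h := hconn (TT' n) (TT n) ⟨TT'_tri hn, TT'_avoids hn⟩ ⟨TT_tri hn, TT_avoids hn⟩
  rcases Relation.ReflTransGen.cases_tail h with heq | ⟨c, _, hstep⟩
  · exact TT'_ne hn heq.symm
  · exact frozen hn c hstep.1 (by
      have hadj := hstep.2.2
      unfold FlipAdj at hadj ⊢
      rwa [symmDiff_comm])

end FlipCut
end

section
/- For every integer n ≥ 4, every triangulation T of the convex n-gon has at least two ears: there exist two distinct vertices i ≠ j such that the chord {i - 1, i + 1} belongs to T and the chord {j - 1, j + 1} belongs to T. -/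
namespace FlipCut

set_option linter.unusedSectionVars false

section TwoEars

variable {n : ℕ} [NeZero n]

/-- cyclic position of `x` relative to `a`. -/
def posv (a x : ZMod n) : ℕ := (x - a).val

lemma posv_lt (a x : ZMod n) : posv a x < n := ZMod.val_lt _

lemma cast_posv (a x : ZMod n) : ((posv a x : ℕ) : ZMod n) = x - a :=
  ZMod.natCast_zmod_val _

lemma eq_add_posv (a x : ZMod n) : x = a + ((posv a x : ℕ) : ZMod n) := by
  rw [cast_posv]; ring

lemma posv_inj {a x y : ZMod n} (h : posv a x = posv a y) : x = y := by
  rw [eq_add_posv a x, eq_add_posv a y, h]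

lemma posv_self (a : ZMod n) : posv a a = 0 := by simp [posv]

lemma sub_val_eq {a x y : ZMod n} (h : posv a x ≤ posv a y) :
    (y - x).val = posv a y - posv a x := by
  have h1 : y - x = ((posv a y - posv a x : ℕ) : ZMod n) := by
    rw [Nat.cast_sub h, cast_posv, cast_posv]; ring
  have h2 : posv a y - posv a x < n := lt_of_le_of_lt (Nat.sub_le _ _) (posv_lt a y)
  rw [h1, ZMod.val_cast_of_lt h2]

lemma posv_rebase {a c x : ZMod n} (h : posv a c ≤ posv a x) :
    posv c x = posv a x - posv a c := sub_val_eq h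

lemma posv_shift {a c x : ZMod n} (h : posv c x + posv a c < n) :
    posv a x = posv a c + posv c x := by
  have h1 : x - a = ((posv a c + posv c x : ℕ) : ZMod n) := by
    push_cast [cast_posv]; ring
  have h2 := ZMod.val_cast_of_lt (show posv a c + posv c x < n by omega)
  show (x - a).val = _
  rw [h1, h2]

lemma posv_add_cast (a : ZMod n) {m : ℕ} (h : m < n) :
    posv a (a + (m : ZMod n)) = m := by
  show (a + (m : ZMod n) - a).val = m
  rw [add_sub_cancel_left]
  exact ZMod.val_cast_of_lt h

lemma opp_val {a x y : ZMod n} (h : posv a x < posv a y) :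
    (x - y).val = n - (posv a y - posv a x) := by
  have h4 : (y - x).val = posv a y - posv a x := sub_val_eq h.le
  have h5 : y - x ≠ 0 := by
    intro hz; rw [hz, ZMod.val_zero] at h4; omega
  rw [show x - y = -(y - x) by ring, ZMod.neg_val, if_neg h5, h4]

lemma chord_val {x y : ZMod n} (hn4 : 4 ≤ n) (h : IsChord n s(x, y)) :
    2 ≤ (y - x).val ∧ (y - x).val ≤ n - 2 := by
  obtain ⟨hd, hadj⟩ := h
  have hxy : x ≠ y := fun h => hd (by simp [h])
  obtain ⟨h1, h2⟩ := hadj x (by simp) y (by simp) hxy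
  have hz0 : (y - x).val ≠ 0 := by
    rw [Ne, ZMod.val_eq_zero, sub_eq_zero]
    exact fun h => hxy h.symm
  have hz1 : (y - x).val ≠ 1 := by
    intro h
    apply h1
    have hc : y - x = ((1 : ℕ) : ZMod n) := by rw [← h, ZMod.natCast_zmod_val]
    rw [Nat.cast_one] at hc
    linear_combination hc
  have hzm : (y - x).val ≠ n - 1 := by
    intro h
    apply h2
    have hc : y - x = ((n - 1 : ℕ) : ZMod n) := by rw [← h, ZMod.natCast_zmod_val]
    have h3 : ((n - 1 : ℕ) : ZMod n) = -1 := by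
      rw [Nat.cast_sub (show 1 ≤ n by omega), Nat.cast_one, ZMod.natCast_self]
      ring
    rw [h3] at hc
    linear_combination hc
  have := ZMod.val_lt (y - x)
  omega

lemma crosses_of_posv {a x y u v : ZMod n}
    (hxy : posv a x < posv a y)
    (h1 : posv a x < posv a u) (h2 : posv a u < posv a y)
    (h3 : posv a v < posv a x ∨ posv a y < posv a v) :
    Crosses n s(x, y) s(u, v) := by
  have hyx : (x - y).val = n - (posv a y - posv a x) := opp_val hxy
  have hvn := posv_lt a v
  have hyn := posv_lt a y
  refine ⟨x, y, u, v, rfl, rfl, ⟨?_, ?_⟩, ?_, ?_⟩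
  · rw [show (u - x).val = posv a u - posv a x from sub_val_eq h1.le]; omega
  · rw [show (u - x).val = posv a u - posv a x from sub_val_eq h1.le,
      show (y - x).val = posv a y - posv a x from sub_val_eq hxy.le]; omega
  · rcases h3 with hv | hv
    · rw [show (v - y).val = n - (posv a y - posv a v) from
        opp_val (show posv a v < posv a y by omega)]
      omega
    · rw [show (v - y).val = posv a v - posv a y from sub_val_eq hv.le]; omega
  · rcases h3 with hv | hv
    · rw [show (v - y).val = n - (posv a y - posv a v) from
        opp_val (show posv a v < posv a y by omega), hyx]
      omega
    · rw [show (v - y).val = posv a v - posv a y from sub_val_eq hv.le, hyx]; omega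

lemma confine {T : Finset (Sym2 (ZMod n))}
    (hnc : ∀ e ∈ T, ∀ f ∈ T, e ≠ f → ¬ Crosses n e f)
    {a x y u v : ZMod n} (he : s(x, y) ∈ T) (hf : s(u, v) ∈ T)
    (hxy : posv a x < posv a y)
    (h1 : posv a x < posv a u) (h2 : posv a u < posv a y) :
    posv a x ≤ posv a v ∧ posv a v ≤ posv a y := by
  by_contra hcon
  have h3 : posv a v < posv a x ∨ posv a y < posv a v := by omega
  have hne : s(x, y) ≠ s(u, v) := by
    intro heq
    rw [Sym2.eq_iff] at heq
    rcases heq with ⟨rfl, rfl⟩ | ⟨rfl, rfl⟩ <;> omega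
  exact hnc _ he _ hf hne (crosses_of_posv hxy h1 h2 h3)

open scoped Classical in
noncomputable def arcSet (T : Finset (Sym2 (ZMod n))) (a : ZMod n) (k : ℕ) :
    Finset (Sym2 (ZMod n)) :=
  T.filter (fun e => ∀ z ∈ e, posv a z ≤ k)

lemma mem_arcSet {T : Finset (Sym2 (ZMod n))} {a : ZMod n} {k : ℕ} {e : Sym2 (ZMod n)} :
    e ∈ arcSet T a k ↔ e ∈ T ∧ ∀ z ∈ e, posv a z ≤ k := by
  classical
  simp [arcSet, Finset.mem_filter]

lemma chord_rep {T : Finset (Sym2 (ZMod n))} (hn4 : 4 ≤ n)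
    (hch : ∀ e ∈ T, IsChord n e) {e : Sym2 (ZMod n)} (he : e ∈ T) (a : ZMod n) :
    ∃ x y, e = s(x, y) ∧ posv a x + 2 ≤ posv a y ∧ posv a y + 2 ≤ posv a x + n := by
  induction e using Sym2.ind with
  | _ x y =>
    have hc := hch _ he
    have hc' : IsChord n s(y, x) := by rwa [Sym2.eq_swap]
    have h1 := chord_val hn4 hc
    have h2 := chord_val hn4 hc'
    have hxy : x ≠ y := fun h => hc.1 (by simp [h])
    rcases lt_trichotomy (posv a x) (posv a y) with h | h | h
    · refine ⟨x, y, rfl, ?_, ?_⟩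
      · have := sub_val_eq h.le; omega
      · have := opp_val h
        have hn' := posv_lt a y
        omega
    · exact absurd (posv_inj h) hxy
    · refine ⟨y, x, Sym2.eq_swap, ?_, ?_⟩
      · have := sub_val_eq h.le; omega
      · have := opp_val h
        have hn' := posv_lt a x
        omega

lemma arcSet_small {T : Finset (Sym2 (ZMod n))} (hn4 : 4 ≤ n)
    (hch : ∀ e ∈ T, IsChord n e) {a : ZMod n} {k : ℕ} (hk : k ≤ 1) :
    arcSet T a k = ∅ := by
  rw [Finset.eq_empty_iff_forall_notMem]
  intro e he
  rw [mem_arcSet] at he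
  obtain ⟨x, y, rfl, hxy, -⟩ := chord_rep hn4 hch he.1 a
  have hx := he.2 x (by simp)
  have hy := he.2 y (by simp)
  omega

def spanv (a : ZMod n) (e : Sym2 (ZMod n)) : ℕ :=
  Sym2.lift ⟨fun x y => max (posv a x) (posv a y) - min (posv a x) (posv a y),
    fun x y => by dsimp only; rw [max_comm, min_comm]⟩ e

lemma spanv_mk (a x y : ZMod n) :
    spanv a s(x, y) = max (posv a x) (posv a y) - min (posv a x) (posv a y) :=
  Sym2.lift_mk _ _ _

lemma arc_bound {T : Finset (Sym2 (ZMod n))} (hn4 : 4 ≤ n)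
    (hch : ∀ e ∈ T, IsChord n e)
    (hnc : ∀ e ∈ T, ∀ f ∈ T, e ≠ f → ¬ Crosses n e f) :
    ∀ k, ∀ a : ZMod n, 2 ≤ k → k ≤ n - 2 →
      (arcSet T a k).card ≤ k - 1 ∧
      ((arcSet T a k).card = k - 1 →
        ∃ i : ZMod n, 0 < posv a i ∧ posv a i < k ∧ s(i - 1, i + 1) ∈ T) := by
  intro k
  induction k using Nat.strong_induction_on with
  | _ k IH =>
  intro a hk2 hkn
  by_cases hk : k = 2
  · subst hk
    have hsub : arcSet T a 2 ⊆ {s(a, a + 2)} := by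
      intro e he'
      rw [mem_arcSet] at he'
      obtain ⟨x, y, rfl, hxy, hyx⟩ := chord_rep hn4 hch he'.1 a
      have hx := he'.2 x (by simp)
      have hy := he'.2 y (by simp)
      have hx0 : posv a x = 0 := by omega
      have hy2 : posv a y = 2 := by omega
      have hp2 : posv a (a + 2) = 2 := by
        have h2 := posv_add_cast a (show (2 : ℕ) < n by omega)
        norm_num at h2
        exact h2
      have hax : x = a := posv_inj (by rw [hx0, posv_self])
      have hay : y = a + 2 := posv_inj (by rw [hy2, hp2])
      rw [hax, hay]
      exact Finset.mem_singleton_self _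
    have hcd : (arcSet T a 2).card ≤ 1 :=
      le_trans (Finset.card_le_card hsub) (by simp)
    refine ⟨hcd, fun hc1 => ?_⟩
    have hne : (arcSet T a 2).Nonempty := Finset.card_pos.mp (by omega)
    obtain ⟨e, he⟩ := hne
    have heq : e = s(a, a + 2) := Finset.mem_singleton.mp (hsub he)
    have hmem : s(a, a + 2) ∈ T := by
      rw [← heq]; exact (mem_arcSet.mp he).1
    refine ⟨a + 1, ?_, ?_, ?_⟩
    · have h1 : posv a (a + 1) = 1 := by
        have := posv_add_cast a (show (1 : ℕ) < n by omega)
        norm_num at this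
        exact this
      omega
    · have h1 : posv a (a + 1) = 1 := by
        have := posv_add_cast a (show (1 : ℕ) < n by omega)
        norm_num at this
        exact this
      omega
    · have h1 : a + 1 - 1 = a := by ring
      have h2 : a + 1 + 1 = a + 2 := by ring
      rw [h1, h2]
      exact hmem
  · have hk3 : 3 ≤ k := by omega
    have hkltn : k < n := by omega
    have hposfull : posv a (a + (k : ZMod n)) = k := posv_add_cast a hkltn
    set full : Sym2 (ZMod n) := s(a, a + (k : ZMod n)) with hfulldef
    rcases Finset.eq_empty_or_nonempty ((arcSet T a k).erase full) with hS'e | hS'ne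
    · have hsub : arcSet T a k ⊆ {full} := by
        intro e he
        by_cases h : e = full
        · simp [h]
        · exfalso
          have : e ∈ (arcSet T a k).erase full := Finset.mem_erase.mpr ⟨h, he⟩
          rw [hS'e] at this
          exact absurd this (Finset.notMem_empty _)
      have hcd : (arcSet T a k).card ≤ 1 :=
        le_trans (Finset.card_le_card hsub) (by simp)
      exact ⟨by omega, fun h => absurd h (by omega)⟩
    · obtain ⟨e₀, he₀S', hmax⟩ := Finset.exists_max_image _ (spanv a) hS'ne
      have he₀arc : e₀ ∈ arcSet T a k := Finset.mem_of_mem_erase he₀S'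
      have he₀T : e₀ ∈ T := (mem_arcSet.mp he₀arc).1
      obtain ⟨c, d, he₀rep, hpq, hqpn⟩ := chord_rep hn4 hch he₀T a
      have hqk : posv a d ≤ k := (mem_arcSet.mp he₀arc).2 d (by rw [he₀rep]; simp)
      have hpk : posv a c ≤ k := (mem_arcSet.mp he₀arc).2 c (by rw [he₀rep]; simp)
      set p := posv a c with hpdef
      set q := posv a d with hqdef
      have hspan : spanv a e₀ = q - p := by
        rw [he₀rep, spanv_mk, max_eq_right (by omega : p ≤ q), min_eq_left (by omega : p ≤ q)]
      have hqpk : q - p ≤ k - 1 := by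
        by_contra h
        have hp0 : p = 0 := by omega
        have hqk' : q = k := by omega
        have hc : c = a := posv_inj (by rw [← hpdef, hp0, posv_self])
        have hd : d = a + (k : ZMod n) := posv_inj (by rw [← hqdef, hqk', hposfull])
        exact (Finset.ne_of_mem_erase he₀S') (by rw [he₀rep, hc, hd])
      have hsubdec : arcSet T a k ⊆
          ((arcSet T a p ∪ arcSet T c (q - p)) ∪ arcSet T d (k - q)) ∪ {full} := by
        intro f hf
        by_cases hffull : f = full
        · simp [hffull]
        have hfS' : f ∈ (arcSet T a k).erase full := Finset.mem_erase.mpr ⟨hffull, hf⟩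
        have hfT : f ∈ T := (mem_arcSet.mp hf).1
        obtain ⟨u, v, hfrep, hst, hts⟩ := chord_rep hn4 hch hfT a
        have hsk : posv a u ≤ k := (mem_arcSet.mp hf).2 u (by rw [hfrep]; simp)
        have htk : posv a v ≤ k := (mem_arcSet.mp hf).2 v (by rw [hfrep]; simp)
        set s := posv a u with hsdef
        set t := posv a v with htdef
        have hmid : p ≤ s → t ≤ q → f ∈ arcSet T c (q - p) := by
          intro h1 h2
          rw [mem_arcSet]
          refine ⟨hfT, ?_⟩
          intro z hz
          rw [hfrep, Sym2.mem_iff] at hz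
          rcases hz with rfl | rfl
          · rw [posv_rebase (show posv a c ≤ posv a z by omega)]; omega
          · rw [posv_rebase (show posv a c ≤ posv a z by omega)]; omega
        have he₀T' : s(c, d) ∈ T := by rw [← he₀rep]; exact he₀T
        have hfT' : s(u, v) ∈ T := by rw [← hfrep]; exact hfT
        by_cases hc1 : p < s ∧ s < q
        · have hcon := confine hnc he₀T' hfT' (show p < q by omega) hc1.1 hc1.2
          exact Finset.mem_union_left _ (Finset.mem_union_left _
            (Finset.mem_union_right _ (hmid (by omega) (by omega))))
        by_cases hc2 : p < t ∧ t < q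
        · have hfT'' : s(v, u) ∈ T := by rw [Sym2.eq_swap, ← hfrep]; exact hfT
          have hcon := confine hnc he₀T' hfT'' (show p < q by omega) hc2.1 hc2.2
          exact Finset.mem_union_left _ (Finset.mem_union_left _
            (Finset.mem_union_right _ (hmid (by omega) (by omega))))
        by_cases hc3 : t ≤ p
        · refine Finset.mem_union_left _ (Finset.mem_union_left _
            (Finset.mem_union_left _ ?_))
          rw [mem_arcSet]
          refine ⟨hfT, ?_⟩
          intro z hz
          rw [hfrep, Sym2.mem_iff] at hz
          rcases hz with rfl | rfl <;> omega
        by_cases hc4 : q ≤ s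
        · refine Finset.mem_union_left _ (Finset.mem_union_right _ ?_)
          rw [mem_arcSet]
          refine ⟨hfT, ?_⟩
          intro z hz
          rw [hfrep, Sym2.mem_iff] at hz
          rcases hz with rfl | rfl
          · rw [posv_rebase (show posv a d ≤ posv a z by omega)]; omega
          · rw [posv_rebase (show posv a d ≤ posv a z by omega)]; omega
        · have hsp : s ≤ p ∧ q ≤ t := by omega
          have hspanf : spanv a f = t - s := by
            rw [hfrep, spanv_mk, max_eq_right (by omega : s ≤ t), min_eq_left (by omega : s ≤ t)]
          have hmx := hmax f hfS'
          rw [hspanf, hspan] at hmx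
          exact Finset.mem_union_left _ (Finset.mem_union_left _
            (Finset.mem_union_right _ (hmid (by omega) (by omega))))
      have hA : (arcSet T a p).card ≤ p - 1 := by
        by_cases hp2 : 2 ≤ p
        · exact (IH p (by omega) a hp2 (by omega)).1
        · rw [arcSet_small hn4 hch (by omega)]; simp
      have hB : (arcSet T c (q - p)).card ≤ q - p - 1 :=
        (IH (q - p) (by omega) c (by omega) (by omega)).1
      have hC : (arcSet T d (k - q)).card ≤ k - q - 1 := by
        by_cases h2 : 2 ≤ k - q
        · exact (IH (k - q) (by omega) d h2 (by omega)).1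
        · rw [arcSet_small hn4 hch (by omega)]; simp
      have hcards : (arcSet T a k).card ≤
          (arcSet T a p).card + (arcSet T c (q - p)).card + (arcSet T d (k - q)).card + 1 := by
        have h1 := Finset.card_le_card hsubdec
        have h2 := Finset.card_union_le
          ((arcSet T a p ∪ arcSet T c (q - p)) ∪ arcSet T d (k - q)) ({full} : Finset (Sym2 (ZMod n)))
        have h3 := Finset.card_union_le (arcSet T a p ∪ arcSet T c (q - p)) (arcSet T d (k - q))
        have h4 := Finset.card_union_le (arcSet T a p) (arcSet T c (q - p))
        have h5 : ({full} : Finset (Sym2 (ZMod n))).card = 1 := Finset.card_singleton _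
        omega
      refine ⟨by omega, fun hcardk => ?_⟩
      have hBeq : (arcSet T c (q - p)).card = q - p - 1 := by omega
      obtain ⟨i, hi1, hi2, hiear⟩ :=
        (IH (q - p) (by omega) c (by omega) (by omega)).2 hBeq
      have hshift : posv a i = p + posv c i :=
        posv_shift (by omega : posv c i + posv a c < n)
      exact ⟨i, by omega, by omega, hiear⟩

theorem triangulation_two_ears' (n : ℕ) (hn : 4 ≤ n)
    (T : Finset (Sym2 (ZMod n)))
    (hcard : T.card = n - 3) (hch : ∀ e ∈ T, IsChord n e)
    (hnc : ∀ e ∈ T, ∀ f ∈ T, e ≠ f → ¬ Crosses n e f) :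
    ∃ i j : ZMod n, i ≠ j ∧ s(i - 1, i + 1) ∈ T ∧ s(j - 1, j + 1) ∈ T := by
  haveI : NeZero n := ⟨by omega⟩
  have hTne : T.Nonempty := Finset.card_pos.mp (by omega)
  obtain ⟨e₀, he₀⟩ := hTne
  obtain ⟨x, y, he₀rep, -, -⟩ := chord_rep hn hch he₀ 0
  have he₀T' : s(x, y) ∈ T := by rw [← he₀rep]; exact he₀
  have hcv' := chord_val hn (hch _ he₀T')
  obtain ⟨k, hkdef⟩ : ∃ k, posv x y = k := ⟨_, rfl⟩
  have hcv : 2 ≤ k ∧ k ≤ n - 2 := by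
    have h : 2 ≤ posv x y ∧ posv x y ≤ n - 2 := hcv'
    omega
  clear hcv'
  have hposxy : posv x y = k := hkdef
  have hposxx : posv x x = 0 := posv_self x
  have hposyy : posv y y = 0 := posv_self y
  have hposyx : posv y x = n - k := by
    have h0 : posv x x < posv x y := by omega
    have h1 := opp_val h0
    show (x - y).val = n - k
    omega
  have hb1 : (arcSet T x k).card ≤ k - 1 :=
    (arc_bound hn hch hnc k x (by omega) (by omega)).1
  have hb2 : (arcSet T y (n - k)).card ≤ n - k - 1 :=
    (arc_bound hn hch hnc (n - k) y (by omega) (by omega)).1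
  have hsub : T ⊆ arcSet T x k ∪ arcSet T y (n - k) := by
    intro f hf
    obtain ⟨u, v, hfrep, hst, hts⟩ := chord_rep hn hch hf x
    have hun := posv_lt x u
    have hvn := posv_lt x v
    have hfT' : s(u, v) ∈ T := by rw [← hfrep]; exact hf
    have hmemS1 : posv x u ≤ k → posv x v ≤ k → f ∈ arcSet T x k := by
      intro h1 h2
      rw [mem_arcSet]
      refine ⟨hf, ?_⟩
      intro z hz
      rw [hfrep, Sym2.mem_iff] at hz
      rcases hz with rfl | rfl <;> omega
    by_cases hc1 : 0 < posv x u ∧ posv x u < k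
    · have hcon := confine hnc he₀T' hfT' (show posv x x < posv x y by omega)
        (by omega) (by omega)
      exact Finset.mem_union_left _ (hmemS1 (by omega) (by omega))
    by_cases hc2 : 0 < posv x v ∧ posv x v < k
    · have hfT'' : s(v, u) ∈ T := by rw [Sym2.eq_swap, ← hfrep]; exact hf
      have hcon := confine hnc he₀T' hfT'' (show posv x x < posv x y by omega)
        (by omega) (by omega)
      exact Finset.mem_union_left _ (hmemS1 (by omega) (by omega))
    · refine Finset.mem_union_right _ ?_
      rw [mem_arcSet]
      refine ⟨hf, ?_⟩
      have key : ∀ w : ZMod n, posv x w = 0 ∨ k ≤ posv x w → posv x w < n →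
          posv y w ≤ n - k := by
        intro w hw hwn
        rcases hw with hw0 | hwk
        · have hwx : w = x := posv_inj (by rw [hw0, hposxx])
          rw [hwx, hposyx]
        · rw [posv_rebase (show posv x y ≤ posv x w by omega)]
          omega
      intro z hz
      rw [hfrep, Sym2.mem_iff] at hz
      rcases hz with rfl | rfl
      · exact key _ (by omega) (by omega)
      · exact key _ (by omega) (by omega)
  have hinter : e₀ ∈ arcSet T x k ∩ arcSet T y (n - k) := by
    rw [Finset.mem_inter, mem_arcSet, mem_arcSet]
    refine ⟨⟨he₀, ?_⟩, he₀, ?_⟩ <;> intro z hz <;> rw [he₀rep, Sym2.mem_iff] at hz <;>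
      rcases hz with rfl | rfl <;> omega
  have hcu := Finset.card_le_card hsub
  have hie := Finset.card_union_add_card_inter (arcSet T x k) (arcSet T y (n - k))
  have h1le : 1 ≤ ((arcSet T x k) ∩ (arcSet T y (n - k))).card :=
    Finset.card_pos.mpr ⟨e₀, hinter⟩
  have heq1 : (arcSet T x k).card = k - 1 := by omega
  have heq2 : (arcSet T y (n - k)).card = n - k - 1 := by omega
  obtain ⟨i, hi1, hi2, hie1⟩ :=
    (arc_bound hn hch hnc k x (by omega) (by omega)).2 heq1
  obtain ⟨j, hj1, hj2, hje1⟩ :=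
    (arc_bound hn hch hnc (n - k) y (by omega) (by omega)).2 heq2
  refine ⟨i, j, ?_, hie1, hje1⟩
  intro hij
  have hshift : posv x j = k + posv y j := by
    have hs := posv_shift (a := x) (c := y) (x := j)
      (show posv y j + posv x y < n by omega)
    omega
  rw [hij] at hi2
  omega

end TwoEars

/-- For every `n ≥ 4`, every triangulation of the convex
`n`-gon has at least two ears: there are distinct vertices `i ≠ j` with the
chords `{i - 1, i + 1}` and `{j - 1, j + 1}` both in the triangulation. -/
theorem triangulation_two_ears (n : ℕ) (hn : 4 ≤ n)
    (T : Finset (Sym2 (ZMod n))) (hT : IsTriangulation n T) :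
    ∃ i j : ZMod n, i ≠ j ∧ s(i - 1, i + 1) ∈ T ∧ s(j - 1, j + 1) ∈ T := by
  obtain ⟨hcard, hch, hnc⟩ := hT
  exact triangulation_two_ears' n hn T hcard hch hnc

end FlipCut
end
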